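/- The coproduct Δ_list is a morphism of algebras for the shifted concatenation: for all lists u, v ∈ L, Δ_list(u ∗̄ v) = Δ_list(u) · Δ_list(v), where ∗̄ is extended bilinearly to k⟨L⟩ and the product on k⟨L⟩ ⊗_k k⟨L⟩ is the componentwise one, (a ⊗ b)·(c ⊗ d) = (a ∗̄ c) ⊗ (b ∗̄ d), extended bilinearly. -/

import Mathlib

open scoped TensorProduct

/-- A monomial: a nonzero finitely supported multi-index with support contained in `{1,2,…}`. -/
def Mon : Type := {m : ℕ →₀ ℕ // m ≠ 0 ∧ m 0 = 0}

namespace Mon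

/-- Product of monomials: pointwise addition of multi-indices. -/
noncomputable instance : Mul Mon :=
  ⟨fun a b =>
    ⟨a.1 + b.1, by
      constructor
      · intro h
        exact a.2.1 ((add_eq_zero.mp h).1)
      · simp [Finsupp.add_apply, a.2.2, b.2.2]⟩⟩

/-- The total degree (weight) of a monomial. -/
def w (m : Mon) : ℕ := m.1.sum fun _ v => v

/-- The set of variable indices occurring in a list of monomials. -/
def IndAlph (l : List Mon) : Finset ℕ := (l.map fun m => m.1.support).foldr (· ∪ ·) ∅

/-- The maximal variable index occurring in a list of monomials (`0` for the empty list). -/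
def maxInd (l : List Mon) : ℕ := (IndAlph l).sup id

/-- The embedding `i ↦ i + p` of `ℕ` into itself. -/
def addEmb (p : ℕ) : ℕ ↪ ℕ := ⟨fun i => i + p, fun a b h => by simpa using h⟩

/-- The shift `T_p` of a monomial: translate the support by `p`. -/
noncomputable def Tmon (p : ℕ) (m : Mon) : Mon :=
  ⟨m.1.embDomain (addEmb p), by
    refine ⟨fun h => m.2.1 (Finsupp.embDomain_eq_zero.mp h), ?_⟩
    by_cases hp : p = 0
    · subst hp
      have h0 : (Finsupp.embDomain (addEmb 0) m.1) ((addEmb 0) 0) = m.1 0 :=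
        Finsupp.embDomain_apply_self _ _ _
      simpa [addEmb] using h0.trans m.2.2
    · apply Finsupp.embDomain_notin_range
      rintro ⟨i, hi⟩
      simp only [addEmb, Function.Embedding.coeFn_mk] at hi
      change i + p = 0 at hi
      omega⟩

/-- Shifted concatenation of lists of monomials. -/
noncomputable def sconc (l₁ l₂ : List Mon) : List Mon := l₁ ++ l₂.map (Tmon (maxInd l₁))

/-- A list of monomials is compact when its alphabet has no holes:
`IndAlph l = {1,…,card (IndAlph l)}`. -/
def Compact (l : List Mon) : Prop := IndAlph l = Finset.Icc 1 (IndAlph l).card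

/-- The re-indexing function of a list `l` : on `IndAlph l` it is the unique strictly
increasing bijection onto `{1,…,card (IndAlph l)}` (extended injectively elsewhere). -/
noncomputable def phi (l : List Mon) (i : ℕ) : ℕ :=
  if h : i ∈ IndAlph l then
    (((IndAlph l).orderIsoOfFin rfl).symm ⟨i, h⟩ : Fin (IndAlph l).card) + 1
  else i + (IndAlph l).card + 1

lemma phi_pos (l : List Mon) (i : ℕ) : 1 ≤ phi l i := by
  unfold phi; split_ifs <;> omega

lemma phi_inj (l : List Mon) : Function.Injective (phi l) := by
  intro a b hab
  unfold phi at hab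
  split_ifs at hab with ha hb hb
  · have h1 : (((IndAlph l).orderIsoOfFin rfl).symm ⟨a, ha⟩) =
        (((IndAlph l).orderIsoOfFin rfl).symm ⟨b, hb⟩) := Fin.ext (by omega)
    have h2 := congrArg ((IndAlph l).orderIsoOfFin rfl) h1
    rw [OrderIso.apply_symm_apply, OrderIso.apply_symm_apply] at h2
    exact congrArg Subtype.val h2
  · have := (((IndAlph l).orderIsoOfFin rfl).symm ⟨a, ha⟩).isLt; omega
  · have := (((IndAlph l).orderIsoOfFin rfl).symm ⟨b, hb⟩).isLt; omega
  · omega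

/-- Action of the compacting operator of `l` on a single monomial. -/
noncomputable def cptMon (l : List Mon) (m : Mon) : Mon :=
  ⟨m.1.mapDomain (phi l), by
    constructor
    · intro h
      apply m.2.1
      exact Finsupp.mapDomain_injective (phi_inj l) (by simpa using h)
    · apply Finsupp.mapDomain_notin_range
      rintro ⟨i, hi⟩
      have := phi_pos l i
      omega⟩

/-- The compacting operator on lists of monomials. -/
noncomputable def cpt (l : List Mon) : List Mon := l.map (cptMon l)

/-- `sub l I` is the sublist of `l` consisting of the entries whose (1-based) position
belongs to `I`. -/
def sub (l : List Mon) (I : Finset ℕ) : List Mon :=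
  (List.range l.length).filterMap fun j => if j + 1 ∈ I then l[j]? else none

/-- `∗̄`-irreducible lists: nonempty and with no factorization into two nonempty lists. -/
def SIrred (l : List Mon) : Prop :=
  l ≠ [] ∧ ∀ u v : List Mon, l = sconc u v → u = [] ∨ v = []

end Mon

/-- The free `k`-module on the set of lists of monomials. -/
abbrev FreeL (k : Type*) [CommRing k] : Type _ := (List Mon) →₀ k

/-- The coproduct `Δ_list`, defined on a basis list `l` of length `n` by
`Δ_list l = Σ_{I ⊆ {1..n}} cpt (l[I]) ⊗ cpt (l[{1..n} \ I])`. -/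
noncomputable def deltaList (k : Type*) [CommRing k] :
    FreeL k →ₗ[k] TensorProduct k (FreeL k) (FreeL k) :=
  Finsupp.lift _ k _ fun l =>
    ∑ I ∈ (Finset.Icc 1 l.length).powerset,
      Finsupp.single (Mon.cpt (Mon.sub l I)) (1 : k) ⊗ₜ[k]
        Finsupp.single (Mon.cpt (Mon.sub l (Finset.Icc 1 l.length \ I))) (1 : k)

/-- The bilinear extension of the shifted concatenation to the free module. -/
noncomputable def sconcL (k : Type*) [CommRing k] : FreeL k →ₗ[k] FreeL k →ₗ[k] FreeL k :=
  Finsupp.lift _ k _ fun u => Finsupp.lift _ k _ fun v => Finsupp.single (Mon.sconc u v) (1 : k)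

open Classical in
/-- The counit: coefficient of the empty list. -/
noncomputable def epsL (k : Type*) [CommRing k] : FreeL k →ₗ[k] k :=
  Finsupp.lift _ k _ fun l => if l = ([] : List Mon) then (1 : k) else 0

/-!
A subset of the positions of `u ∗̄ v` is a pair `(I, K)` of subsets of the positions of `u` and
of `v`, and its complement is the pair of complements. In the sublist of `u ∗̄ v` at `(I, K)` all
variables coming from `u` are smaller than the shifted ones coming from `v`; since `φ` counts
smaller variables, compacting this sublist gives `cpt (u[I]) ∗̄ cpt (v[K])`. So the term of
`Δ_list (u ∗̄ v)` indexed by `(I, K)` is the product of the terms of `Δ_list u` and `Δ_list v`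
indexed by `I` and by `K`.
-/

open Finset

namespace Finset

variable {α : Type*}

theorem orderIsoOfFin_symm_apply_eq_card_filter_lt [LinearOrder α] (s : Finset α) {k : ℕ}
    (h : s.card = k) (x : s) : (((s.orderIsoOfFin h).symm x : Fin k) : ℕ) = #{y ∈ s | y < x.1} := by
  set e := s.orderIsoOfFin h
  have hfilter : {y ∈ s | y < x.1} = (Iio (e.symm x)).map (s.orderEmbOfFin h).toEmbedding := by
    ext y
    simp only [mem_filter, mem_map, mem_Iio, RelEmbedding.coe_toEmbedding]
    constructor
    · rintro ⟨hy, hyx⟩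
      refine ⟨e.symm ⟨y, hy⟩, e.symm.strictMono (show (⟨y, hy⟩ : s) < x from hyx), ?_⟩
      rw [← coe_orderIsoOfFin_apply, OrderIso.apply_symm_apply]
    · rintro ⟨z, hz, rfl⟩
      refine ⟨orderEmbOfFin_mem s h z, ?_⟩
      have hlt := e.strictMono hz
      rwa [OrderIso.apply_symm_apply, ← Subtype.coe_lt_coe, coe_orderIsoOfFin_apply] at hlt
  rw [hfilter, card_map, Fin.card_Iio]

variable {M : Type*} [AddCommMonoid M]

theorem sum_powerset_map {β : Type*} [DecidableEq β] (e : α ↪ β) (s : Finset α)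
    (f : Finset β → M) : ∑ K ∈ (s.map e).powerset, f K = ∑ K ∈ s.powerset, f (K.map e) := by
  have : (s.map e).powerset = s.powerset.image (map e) := by
    ext K
    simp [subset_map_iff, eq_comm]
  rw [this, sum_image fun _ _ _ _ h => map_injective e h]

theorem sum_powerset_union_sdiff [DecidableEq α] {s t : Finset α} (hst : Disjoint s t)
    (f : Finset α → Finset α → M) :
    ∑ J ∈ (s ∪ t).powerset, f J ((s ∪ t) \ J) =
      ∑ I ∈ s.powerset, ∑ K ∈ t.powerset, f (I ∪ K) (s \ I ∪ t \ K) := by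
  rw [← sum_product']
  rw [disjoint_left] at hst
  refine sum_nbij' (fun J => (J ∩ s, J ∩ t)) (fun P => P.1 ∪ P.2) ?_ ?_ ?_ ?_ ?_ <;>
    simp only [mem_product, mem_powerset, Prod.forall, Prod.ext_iff]
  · grind
  · grind
  · grind
  · grind
  · exact fun J hJ => by congr 1 <;> grind

end Finset

namespace Mon

@[simp]
lemma addEmb_apply (p i : ℕ) : addEmb p i = i + p := rfl

lemma Icc_add_eq_union_map (n m : ℕ) :
    Icc 1 (n + m) = Icc 1 n ∪ (Icc 1 m).map (addEmb n) := by
  ext i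
  simp only [mem_Icc, mem_union, mem_map, addEmb_apply]
  constructor
  · intro hi
    by_cases h : i ≤ n
    · exact Or.inl ⟨hi.1, h⟩
    · exact Or.inr ⟨i - n, by omega, by omega⟩
  · rintro (hi | ⟨j, hj, rfl⟩) <;> omega

lemma sum_powerset_Icc_add {M : Type*} [AddCommMonoid M] (n m : ℕ)
    (f : Finset ℕ → Finset ℕ → M) :
    ∑ J ∈ (Icc 1 (n + m)).powerset, f J (Icc 1 (n + m) \ J) =
      ∑ I ∈ (Icc 1 n).powerset, ∑ K ∈ (Icc 1 m).powerset,
        f (I ∪ K.map (addEmb n)) (Icc 1 n \ I ∪ (Icc 1 m \ K).map (addEmb n)) := by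
  have hdisj : Disjoint (Icc 1 n) ((Icc 1 m).map (addEmb n)) := by
    simp only [disjoint_left, mem_Icc, mem_map, addEmb_apply]
    rintro i hi ⟨j, hj, rfl⟩
    omega
  rw [Icc_add_eq_union_map, sum_powerset_union_sdiff hdisj]
  refine sum_congr rfl fun I _ => ?_
  rw [sum_powerset_map]
  simp only [Finset.map_sdiff]

lemma mem_IndAlph {l : List Mon} {i : ℕ} : i ∈ IndAlph l ↔ ∃ m ∈ l, i ∈ m.1.support := by
  induction l with
  | nil => simp [IndAlph]
  | cons a t ih =>
    change i ∈ a.1.support ∪ IndAlph t ↔ _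
    rw [mem_union, ih, List.exists_mem_cons_iff]

lemma pos_of_mem_IndAlph {l : List Mon} {i : ℕ} (h : i ∈ IndAlph l) : 0 < i := by
  obtain ⟨m, -, hi⟩ := mem_IndAlph.mp h
  refine Nat.pos_of_ne_zero fun h0 => ?_
  subst h0
  exact Finsupp.mem_support_iff.mp hi m.2.2

lemma IndAlph_mono {l l' : List Mon} (h : l ⊆ l') : IndAlph l ⊆ IndAlph l' := by
  intro i hi
  obtain ⟨m, hm, hi⟩ := mem_IndAlph.mp hi
  exact mem_IndAlph.mpr ⟨m, h hm, hi⟩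

lemma IndAlph_append (a b : List Mon) : IndAlph (a ++ b) = IndAlph a ∪ IndAlph b := by
  ext i
  simp only [mem_IndAlph, mem_union, List.mem_append, or_and_right, exists_or]

lemma IndAlph_map {f : Mon → Mon} (g : ℕ ↪ ℕ) (hf : ∀ m, (f m).1.support = m.1.support.map g)
    (l : List Mon) : IndAlph (l.map f) = (IndAlph l).map g := by
  ext i
  simp only [mem_IndAlph, mem_map]
  constructor
  · rintro ⟨_, hm', hi⟩
    obtain ⟨m, hm, rfl⟩ := List.mem_map.mp hm'
    obtain ⟨j, hj, rfl⟩ := mem_map.mp (hf m ▸ hi)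
    exact ⟨j, ⟨m, hm, hj⟩, rfl⟩
  · rintro ⟨j, ⟨m, hm, hj⟩, rfl⟩
    exact ⟨f m, List.mem_map_of_mem hm, hf m ▸ mem_map_of_mem g hj⟩

lemma IndAlph_map_Tmon (p : ℕ) (l : List Mon) :
    IndAlph (l.map (Tmon p)) = (IndAlph l).map (addEmb p) :=
  IndAlph_map _ (fun _ => Finsupp.support_embDomain _ _) l

lemma phi_of_mem {l : List Mon} {i : ℕ} (h : i ∈ IndAlph l) :
    phi l i = #{j ∈ IndAlph l | j < i} + 1 := by
  rw [phi, dif_pos h, orderIsoOfFin_symm_apply_eq_card_filter_lt]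

lemma phi_mem_Icc {l : List Mon} {i : ℕ} (h : i ∈ IndAlph l) :
    phi l i ∈ Icc 1 #(IndAlph l) := by
  rw [phi, dif_pos h, mem_Icc]
  have := (((IndAlph l).orderIsoOfFin rfl).symm ⟨i, h⟩).isLt
  omega

lemma IndAlph_cpt (l : List Mon) : IndAlph (cpt l) = Icc 1 #(IndAlph l) := by
  have himage : IndAlph (cpt l) = (IndAlph l).image (phi l) := by
    let φ : ℕ ↪ ℕ := ⟨phi l, phi_inj l⟩
    refine (IndAlph_map φ (fun m => ?_) l).trans (map_eq_image φ _)
    exact (Finsupp.mapDomain_support_of_injective (phi_inj l) m.1).trans (map_eq_image φ _).symm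
  rw [himage]
  refine eq_of_subset_of_card_le (fun x hx => ?_) ?_
  · obtain ⟨i, hi, rfl⟩ := mem_image.mp hx
    exact phi_mem_Icc hi
  · rw [Nat.card_Icc, card_image_of_injective _ (phi_inj l), Nat.add_sub_cancel]

lemma maxInd_cpt (l : List Mon) : maxInd (cpt l) = #(IndAlph l) := by
  rw [maxInd, IndAlph_cpt]
  refine le_antisymm (Finset.sup_le fun i hi => (mem_Icc.mp hi).2) ?_
  rcases Nat.eq_zero_or_pos #(IndAlph l) with h | h
  · exact h.le.trans (Nat.zero_le _)
  · exact le_sup (f := id) (mem_Icc.mpr ⟨h, le_rfl⟩)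

lemma IndAlph_append_map_Tmon (a b : List Mon) (p : ℕ) :
    IndAlph (a ++ b.map (Tmon p)) = IndAlph a ∪ (IndAlph b).map (addEmb p) := by
  rw [IndAlph_append, IndAlph_map_Tmon]

lemma phi_append_map_Tmon_of_mem_left {a : List Mon} (b : List Mon) {p i : ℕ}
    (hp : ∀ i ∈ IndAlph a, i ≤ p) (hi : i ∈ IndAlph a) :
    phi (a ++ b.map (Tmon p)) i = phi a i := by
  have hfilter : {j ∈ IndAlph (a ++ b.map (Tmon p)) | j < i} = {j ∈ IndAlph a | j < i} := by
    rw [IndAlph_append_map_Tmon, filter_union, filter_map, union_eq_left]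
    rintro _ hx
    obtain ⟨j, hj, rfl⟩ := mem_map.mp hx
    simp only [mem_filter, Function.comp_apply, addEmb_apply] at hj
    have := pos_of_mem_IndAlph hj.1
    have := hp i hi
    omega
  rw [phi_of_mem (IndAlph_append_map_Tmon a b p ▸ mem_union_left _ hi), phi_of_mem hi, hfilter]

lemma phi_append_map_Tmon_add {a b : List Mon} {p j : ℕ} (hp : ∀ i ∈ IndAlph a, i ≤ p)
    (hj : j ∈ IndAlph b) :
    phi (a ++ b.map (Tmon p)) (j + p) = phi b j + #(IndAlph a) := by
  have hlt : ∀ i ∈ IndAlph a, i < j + p := fun i hi =>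
    (hp i hi).trans_lt (Nat.lt_add_of_pos_left (pos_of_mem_IndAlph hj))
  have hdisj : Disjoint (IndAlph a) ({i ∈ IndAlph b | i < j}.map (addEmb p)) := by
    simp only [disjoint_left, mem_map, mem_filter, addEmb_apply]
    rintro _ hi ⟨i, ⟨hib, -⟩, rfl⟩
    have := hp _ hi
    have := pos_of_mem_IndAlph hib
    omega
  have hfilter : {x ∈ IndAlph (a ++ b.map (Tmon p)) | x < j + p} =
      IndAlph a ∪ {i ∈ IndAlph b | i < j}.map (addEmb p) := by
    rw [IndAlph_append_map_Tmon, filter_union, filter_map, filter_true_of_mem hlt]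
    simp only [Function.comp_def, addEmb_apply, add_lt_add_iff_right]
  rw [phi_of_mem (IndAlph_append_map_Tmon a b p ▸ mem_union_right _ (mem_map_of_mem _ hj)),
    phi_of_mem hj, hfilter, card_union_of_disjoint hdisj, card_map]
  ring

lemma cpt_append_map_Tmon (a b : List Mon) {p : ℕ} (hp : ∀ i ∈ IndAlph a, i ≤ p) :
    cpt (a ++ b.map (Tmon p)) = sconc (cpt a) (cpt b) := by
  set c := a ++ b.map (Tmon p)
  have hmon_left : ∀ m ∈ a, cptMon c m = cptMon a m := fun m hm =>
    Subtype.ext <| Finsupp.mapDomain_congr fun i hi =>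
      phi_append_map_Tmon_of_mem_left b hp (mem_IndAlph.mpr ⟨m, hm, hi⟩)
  have hmon_right : ∀ m ∈ b, cptMon c (Tmon p m) = Tmon #(IndAlph a) (cptMon b m) := by
    intro m hm
    refine Subtype.ext ?_
    change (m.1.embDomain (addEmb p)).mapDomain (phi c) =
      (m.1.mapDomain (phi b)).embDomain (addEmb #(IndAlph a))
    rw [Finsupp.embDomain_eq_mapDomain, Finsupp.embDomain_eq_mapDomain,
      ← Finsupp.mapDomain_comp, ← Finsupp.mapDomain_comp]
    exact Finsupp.mapDomain_congr fun i hi =>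
      phi_append_map_Tmon_add hp (mem_IndAlph.mpr ⟨m, hm, hi⟩)
  rw [sconc, maxInd_cpt, cpt, cpt, cpt, List.map_append, List.map_map, List.map_map]
  exact congrArg₂ (· ++ ·) (List.map_congr_left hmon_left) (List.map_congr_left hmon_right)

lemma sub_subset (l : List Mon) (I : Finset ℕ) : sub l I ⊆ l := by
  intro m hm
  obtain ⟨j, -, hj⟩ := List.mem_filterMap.mp hm
  split_ifs at hj
  exact List.mem_of_getElem? hj

lemma sub_map (l : List Mon) (f : Mon → Mon) (I : Finset ℕ) :
    sub (l.map f) I = (sub l I).map f := by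
  rw [sub, sub, List.length_map, List.map_filterMap]
  refine List.filterMap_congr fun j _ => ?_
  split_ifs <;> simp [List.getElem?_map]

lemma sub_append_union (a b : List Mon) {I K : Finset ℕ} (hI : I ⊆ Icc 1 a.length)
    (hK : K ⊆ Icc 1 b.length) :
    sub (a ++ b) (I ∪ K.map (addEmb a.length)) = sub a I ++ sub b K := by
  rw [sub, sub, sub, List.length_append, List.range_add, List.filterMap_append,
    List.filterMap_map]
  congr 1
  · refine List.filterMap_congr fun j hj => ?_
    have hj := List.mem_range.mp hj
    have hmem : j + 1 ∈ I ∪ K.map (addEmb a.length) ↔ j + 1 ∈ I := by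
      simp only [mem_union, mem_map, addEmb_apply, or_iff_left_iff_imp]
      rintro ⟨k, hk, hjk⟩
      have := mem_Icc.mp (hK hk)
      omega
    simp only [hmem, List.getElem?_append_left hj]
  · refine List.filterMap_congr fun j _ => ?_
    have hmem : a.length + j + 1 ∈ I ∪ K.map (addEmb a.length) ↔ j + 1 ∈ K := by
      simp only [mem_union, mem_map, addEmb_apply]
      constructor
      · rintro (h | ⟨k, hk, hjk⟩)
        · have := mem_Icc.mp (hI h)
          omega
        · rwa [show j + 1 = k by omega]
      · exact fun h => Or.inr ⟨j + 1, h, by omega⟩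
    simp only [Function.comp_apply, hmem, List.getElem?_append_right (Nat.le_add_right _ _),
      Nat.add_sub_cancel_left]

lemma length_sconc (u v : List Mon) : (sconc u v).length = u.length + v.length := by
  simp [sconc]

lemma cpt_sub_sconc (u v : List Mon) {I K : Finset ℕ} (hI : I ⊆ Icc 1 u.length)
    (hK : K ⊆ Icc 1 v.length) :
    cpt (sub (sconc u v) (I ∪ K.map (addEmb u.length))) =
      sconc (cpt (sub u I)) (cpt (sub v K)) := by
  rw [sconc, sub_append_union u _ hI (by rwa [List.length_map]), sub_map]
  exact cpt_append_map_Tmon _ _ fun i hi =>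
    le_sup (f := id) (IndAlph_mono (sub_subset u I) hi)

end Mon

lemma Finsupp.lift_single_one {R M X : Type*} [Semiring R] [AddCommMonoid M] [Module R M]
    (f : X → M) (x : X) : Finsupp.lift M R X f (Finsupp.single x 1) = f x := by
  rw [Finsupp.lift_apply, Finsupp.sum_single_index (zero_smul R (f x)), one_smul]

lemma deltaList_single {k : Type*} [CommRing k] (l : List Mon) :
    deltaList k (Finsupp.single l 1) =
      ∑ I ∈ (Icc 1 l.length).powerset,
        Finsupp.single (Mon.cpt (Mon.sub l I)) (1 : k) ⊗ₜ[k]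
          Finsupp.single (Mon.cpt (Mon.sub l (Icc 1 l.length \ I))) (1 : k) :=
  Finsupp.lift_single_one _ l

lemma sconcL_single {k : Type*} [CommRing k] (u v : List Mon) :
    sconcL k (Finsupp.single u 1) (Finsupp.single v 1) =
      Finsupp.single (Mon.sconc u v) (1 : k) := by
  rw [sconcL, Finsupp.lift_single_one, Finsupp.lift_single_one]

/-- ** Statement 9 **: the coproduct is a morphism for the shifted concatenation,
the product on the tensor square being the componentwise one. -/
theorem deltaList_mul (k : Type*) [CommRing k] (u v : List Mon) :
    deltaList k (Finsupp.single (Mon.sconc u v) 1) =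
      (TensorProduct.homTensorHomMap (RingHom.id k) (FreeL k) (FreeL k) (FreeL k) (FreeL k))
        ((TensorProduct.map (sconcL k) (sconcL k)) (deltaList k (Finsupp.single u 1)))
        (deltaList k (Finsupp.single v 1)) := by
  rw [deltaList_single, Mon.length_sconc, Mon.sum_powerset_Icc_add u.length v.length
    fun J Jc => Finsupp.single (Mon.cpt (Mon.sub (Mon.sconc u v) J)) (1 : k) ⊗ₜ[k]
      Finsupp.single (Mon.cpt (Mon.sub (Mon.sconc u v) Jc)) (1 : k)]
  simp only [deltaList_single, map_sum, LinearMap.sum_apply, TensorProduct.map_tmul,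
    TensorProduct.homTensorHomMap_apply, sconcL_single]
  rw [sum_comm (s := (Icc 1 v.length).powerset)]
  refine sum_congr rfl fun I hI => sum_congr rfl fun K hK => ?_
  rw [mem_powerset] at hI hK
  rw [Mon.cpt_sub_sconc u v hI hK, Mon.cpt_sub_sconc u v sdiff_subset sdiff_subset]
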